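/- arXiv:2410.05148 — 3 statements merged into one kernel-verified Lean document; each statement's English description precedes it below -/
import Mathlib

section
/- For every real number u and all real a < b, the limit as ε → 0⁺ of (1/(2πi)) ∫_a^b ( 1/(u − (z + iε)) − 1/(u − (z − iε)) ) dz exists and equals ½(𝟙_{[a,b]}(u) + 𝟙_{(a,b)}(u)); that is, it equals 1 if u ∈ (a,b), equals ½ if u = a or u = b, and equals 0 if u ∉ [a,b]. -/
/-!
For real `z` the integrand equals `2i` times the Poisson kernel `ε / (ε² + (z - u)²)`, whose
integral over `[a, b]` is `arctan ((b - u) / ε) - arctan ((a - u) / ε)`. As `ε → 0⁺`, each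
`arctan (c / ε)` tends to `sign c · π / 2`, and `sign (b - u) - sign (a - u)` is exactly
`𝟙_{[a,b]}(u) + 𝟙_{(a,b)}(u)`.
-/

open MeasureTheory Filter Real Complex Topology

lemma one_div_sub_add_I_mul_sub_one_div_sub_sub_I_mul (u z : ℝ) {ε : ℝ} (hε : ε ≠ 0) :
    1 / ((u : ℂ) - (z + I * ε)) - 1 / ((u : ℂ) - (z - I * ε)) =
      ((2 * (ε / (ε ^ 2 + (z - u) ^ 2)) : ℝ) : ℂ) * I := by
  have h_prod :
      ((u : ℂ) - (z + I * ε)) * ((u : ℂ) - (z - I * ε)) = (ε ^ 2 + (z - u) ^ 2 : ℝ) := by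
    push_cast
    linear_combination (-(ε : ℂ) ^ 2) * I_sq
  have h_ne : ((u : ℂ) - (z + I * ε)) * ((u : ℂ) - (z - I * ε)) ≠ 0 := by
    rw [h_prod]
    exact_mod_cast (by positivity : (0 : ℝ) < ε ^ 2 + (z - u) ^ 2).ne'
  rw [div_sub_div _ _ (left_ne_zero_of_mul h_ne) (right_ne_zero_of_mul h_ne), h_prod]
  push_cast
  field_simp
  ring

lemma integral_div_sq_add_sub_sq (u a b ε : ℝ) :
    ∫ z in a..b, ε / (ε ^ 2 + (z - u) ^ 2) =
      Real.arctan ((b - u) / ε) - Real.arctan ((a - u) / ε) :=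
  (intervalIntegral.integral_comp_sub_right (fun x => ε / (ε ^ 2 + x ^ 2)) u).trans
    integral_div_sq_add_sq

lemma stone_integral_eq_arctan (u a b : ℝ) {ε : ℝ} (hε : ε ≠ 0) :
    (1 / (2 * π * I)) *
        ∫ z in a..b, (1 / ((u : ℂ) - (z + I * ε)) - 1 / ((u : ℂ) - (z - I * ε))) =
      (((Real.arctan ((b - u) / ε) - Real.arctan ((a - u) / ε)) / π : ℝ) : ℂ) := by
  simp_rw [one_div_sub_add_I_mul_sub_one_div_sub_sub_I_mul u _ hε]
  rw [intervalIntegral.integral_mul_const, intervalIntegral.integral_ofReal,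
    intervalIntegral.integral_const_mul, integral_div_sq_add_sub_sq]
  have hπ : (π : ℂ) ≠ 0 := by exact_mod_cast pi_ne_zero
  push_cast
  field_simp

lemma tendsto_arctan_div_nhdsGT_zero (c : ℝ) :
    Tendsto (fun ε => Real.arctan (c / ε)) (𝓝[>] 0) (𝓝 (Real.sign c * (π / 2))) := by
  rcases lt_trichotomy c 0 with hc | rfl | hc
  · rw [Real.sign_of_neg hc, neg_one_mul]
    refine tendsto_nhds_of_tendsto_nhdsWithin (tendsto_arctan_atBot.comp ?_)
    exact (tendsto_inv_nhdsGT_zero.const_mul_atTop_of_neg hc).congr fun ε =>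
      (div_eq_mul_inv c ε).symm
  · simp
  · rw [Real.sign_of_pos hc, one_mul]
    refine tendsto_nhds_of_tendsto_nhdsWithin (tendsto_arctan_atTop.comp ?_)
    exact (tendsto_inv_nhdsGT_zero.const_mul_atTop hc).congr fun ε =>
      (div_eq_mul_inv c ε).symm

lemma sign_sub_sub_sign_sub_eq_indicator {a b : ℝ} (hab : a < b) (u : ℝ) :
    Real.sign (b - u) - Real.sign (a - u) =
      (Set.Icc a b).indicator (fun _ => 1) u + (Set.Ioo a b).indicator (fun _ => 1) u := by
  rcases lt_trichotomy u a with hu | rfl | hu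
  · simp [Real.sign_of_pos, hu, hu.trans hab, hu.not_ge, hu.not_gt]
  · simp [Real.sign_of_pos, hab, hab.le]
  · rcases lt_trichotomy u b with hu' | rfl | hu'
    · simp [Real.sign_of_pos, Real.sign_of_neg, hu, hu', hu.le, hu'.le]
    · simp [Real.sign_of_neg, hab, hab.le]
    · simp [Real.sign_of_neg, hu', hu, hu'.not_ge, hu'.not_gt]

/-- Stone's formula scalar computation: for `u ∈ ℝ` and `a < b`, the limit as `ε → 0⁺` of
`(1/(2πi)) ∫_a^b (1/(u - (z + iε)) - 1/(u - (z - iε))) dz` equals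
`(𝟙_{[a,b]}(u) + 𝟙_{(a,b)}(u)) / 2`. -/
theorem stone_formula_scalar (u a b : ℝ) (hab : a < b) :
    Tendsto
      (fun ε : ℝ => (1 / (2 * Real.pi * Complex.I)) *
        ∫ z in a..b,
          (1 / ((u : ℂ) - ((z : ℂ) + Complex.I * (ε : ℂ)))
            - 1 / ((u : ℂ) - ((z : ℂ) - Complex.I * (ε : ℂ)))))
      (nhdsWithin 0 (Set.Ioi 0))
      (nhds ((((Set.Icc a b).indicator (fun _ => (1 : ℝ)) u
          + (Set.Ioo a b).indicator (fun _ => (1 : ℝ)) u) / 2 : ℝ) : ℂ)) := by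
  have h_real : Tendsto (fun ε => (Real.arctan ((b - u) / ε) - Real.arctan ((a - u) / ε)) / π)
      (𝓝[>] 0) (𝓝 (((Set.Icc a b).indicator (fun _ => (1 : ℝ)) u
        + (Set.Ioo a b).indicator (fun _ => (1 : ℝ)) u) / 2)) := by
    convert ((tendsto_arctan_div_nhdsGT_zero (b - u)).sub
      (tendsto_arctan_div_nhdsGT_zero (a - u))).div_const π using 2
    rw [← sign_sub_sub_sign_sub_eq_indicator hab u]
    field_simp
  refine ((continuous_ofReal.tendsto _).comp h_real).congr' ?_
  filter_upwards [self_mem_nhdsWithin] with ε hε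
  exact (stone_integral_eq_arctan u a b hε.ne').symm
end

section
/- Let ψ : ℝ → ℂ be integrable with integrable Fourier transform 𝓕ψ. Then for every real t ≠ 0 and every a ∈ ℝ, |∫_ℝ e^{−i(tλ² + aλ)} ψ(λ) dλ| ≤ √(π/|t|) · ∫_ℝ |𝓕ψ(ξ)| dξ. In particular, sup_{a ∈ ℝ} |∫_ℝ e^{−i(tλ² + aλ)} ψ(λ) dλ| ≲ |t|^{−1/2} ‖𝓕ψ‖_{L¹}. -/
/-!
For `0 < re b` the phase `e^{-bλ² - iaλ}` is, up to the factor `(b/π)^{1/2}`, the Fourier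
transform of the Gaussian `e^{-(πx - a/2)²/b}`, whose modulus is at most `1`. The multiplication
formula `∫ 𝓕g · ψ = ∫ g · 𝓕ψ` moves the transform onto `ψ` and gives the bound
`√(π/|b|) ‖𝓕ψ‖₁`. The purely oscillatory phase `b = it` is reached as the limit of `b = ε + it`,
`ε → 0⁺`, by dominated convergence, and `|t| ≤ |ε + it|`.
-/

open MeasureTheory FourierTransform Complex Filter
open scoped Real

theorem Real.integral_fourier_smul_eq {V E : Type*} [NormedAddCommGroup V] [InnerProductSpace ℝ V]
    [MeasurableSpace V] [BorelSpace V] [FiniteDimensional ℝ V]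
    [NormedAddCommGroup E] [NormedSpace ℂ E] [CompleteSpace E] {f : V → ℂ} {g : V → E}
    (hf : Integrable f) (hg : Integrable g) :
    ∫ ξ, 𝓕 f ξ • g ξ = ∫ x, f x • 𝓕 g x := by
  have hflip : (innerₗ V).flip = innerₗ V := LinearMap.ext₂ fun x y => real_inner_comm x y
  have := VectorFourier.integral_fourierIntegral_smul_eq_flip (L := innerₗ V)
    Real.continuous_fourierChar continuous_inner hf hg
  rwa [hflip] at this

noncomputable def dualGaussian (b a : ℂ) (x : ℝ) : ℂ := cexp (-(π * x - a / 2) ^ 2 / b)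

section Gaussian

variable {b : ℂ}

theorem dualGaussian_eq_cexp_quadratic (b a : ℂ) (x : ℝ) :
    dualGaussian b a x = cexp (-(π ^ 2 / b) * x ^ 2 + π * a / b * x + -a ^ 2 / (4 * b)) := by
  rw [dualGaussian]; ring_nf

theorem re_pi_sq_div_pos (hb : 0 < b.re) : 0 < ((π : ℂ) ^ 2 / b).re := by
  rw [div_eq_mul_inv, ← ofReal_pow, re_ofReal_mul, inv_re]
  have : 0 < normSq b := normSq_pos.2 (fun h => by simp [h] at hb)
  positivity

theorem integrable_dualGaussian (hb : 0 < b.re) (a : ℂ) : Integrable (dualGaussian b a) := by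
  rw [show dualGaussian b a = _ from funext (dualGaussian_eq_cexp_quadratic b a)]
  exact integrable_cexp_quadratic (re_pi_sq_div_pos hb) _ _

theorem fourier_dualGaussian (hb : 0 < b.re) (a : ℂ) (w : ℝ) :
    𝓕 (dualGaussian b a) w = (b / π) ^ (1 / 2 : ℂ) * cexp (-b * w ^ 2 - I * a * w) := by
  have hb0 : b ≠ 0 := fun h => by simp [h] at hb
  have hre : (-((π : ℂ) ^ 2 / b)).re < 0 := by simpa using re_pi_sq_div_pos hb
  have hexp (x : ℝ) : cexp (↑(-2 * π * x * w) * I) • dualGaussian b a x =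
      cexp (-(π ^ 2 / b) * x ^ 2 + (π * a / b - 2 * π * I * w) * x + -a ^ 2 / (4 * b)) := by
    rw [dualGaussian_eq_cexp_quadratic, smul_eq_mul, ← Complex.exp_add]
    push_cast; ring_nf
  simp_rw [Real.fourier_real_eq_integral_exp_smul, hexp, integral_cexp_quadratic hre]
  congr 1
  · rw [neg_neg]; congr 1; field_simp
  · congr 1; field_simp; ring_nf; rw [I_sq]; ring

theorem norm_dualGaussian_le_one (hb : 0 ≤ b.re) (a x : ℝ) : ‖dualGaussian b a x‖ ≤ 1 := by
  rw [dualGaussian, norm_exp, Real.exp_le_one_iff, neg_div, neg_re, neg_nonpos, div_eq_mul_inv,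
    ← ofReal_ofNat, ← ofReal_div, ← ofReal_mul, ← ofReal_sub, ← ofReal_pow, re_ofReal_mul, inv_re]
  exact mul_nonneg (sq_nonneg _) (div_nonneg hb (normSq_nonneg b))

theorem norm_cpow_half_div_pi (b : ℂ) : ‖(b / π) ^ (1 / 2 : ℂ)‖ = √(‖b‖ / π) := by
  rw [show (1 / 2 : ℂ) = ((1 / 2 : ℝ) : ℂ) by norm_num, norm_cpow_real, norm_div, norm_real,
    Real.norm_of_nonneg Real.pi_pos.le, Real.sqrt_eq_rpow]

theorem norm_integral_cexp_quadratic_mul_le {ψ : ℝ → ℂ} (hψ : Integrable ψ)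
    (hFψ : Integrable (𝓕 ψ)) (hb : 0 < b.re) (a : ℝ) :
    ‖∫ x : ℝ, cexp (-b * x ^ 2 - I * a * x) * ψ x‖ ≤ √(π / ‖b‖) * ∫ ξ, ‖𝓕 ψ ξ‖ := by
  have hb0 : 0 < ‖b‖ := norm_pos_iff.2 fun h => by simp [h] at hb
  have hdual : (b / π) ^ (1 / 2 : ℂ) * ∫ x : ℝ, cexp (-b * x ^ 2 - I * a * x) * ψ x =
      ∫ ξ, dualGaussian b a ξ * 𝓕 ψ ξ := by
    simp_rw [← integral_const_mul, ← mul_assoc, ← fourier_dualGaussian hb]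
    exact Real.integral_fourier_smul_eq (integrable_dualGaussian hb a) hψ
  have hbound : ‖∫ ξ, dualGaussian b a ξ * 𝓕 ψ ξ‖ ≤ ∫ ξ, ‖𝓕 ψ ξ‖ :=
    norm_integral_le_of_norm_le hFψ.norm <| ae_of_all _ fun ξ => by
      rw [norm_mul]
      exact mul_le_of_le_one_left (norm_nonneg _) (norm_dualGaussian_le_one hb.le a ξ)
  rw [← hdual, norm_mul, norm_cpow_half_div_pi] at hbound
  rwa [← inv_div, Real.sqrt_inv, le_inv_mul_iff₀ (by positivity)]

end Gaussian

/-- Dispersive oscillatory-integral bound: if `ψ` is integrable with integrable Fourier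
transform, then for `t ≠ 0` and any `a ∈ ℝ`,
`|∫ e^{-i(tλ² + aλ)} ψ(λ) dλ| ≤ √(π/|t|) ∫ |𝓕ψ(ξ)| dξ`. -/
theorem oscillatory_integral_dispersive_bound (ψ : ℝ → ℂ) (hψ : Integrable ψ)
    (hFψ : Integrable (𝓕 ψ)) (t : ℝ) (ht : t ≠ 0) (a : ℝ) :
    ‖∫ l : ℝ, Complex.exp (-Complex.I * ((t : ℂ) * (l : ℂ) ^ 2 + (a : ℂ) * (l : ℂ))) * ψ l‖
      ≤ Real.sqrt (Real.pi / |t|) * ∫ ξ : ℝ, ‖𝓕 ψ ξ‖ := by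
  have hphase (l : ℝ) : -I * (t * l ^ 2 + a * l) = ((-(t * l ^ 2 + a * l) : ℝ) : ℂ) * I := by
    push_cast; ring
  have hf : Integrable fun l : ℝ => cexp (-I * (t * l ^ 2 + a * l)) * ψ l :=
    hψ.bdd_mul (c := 1) (by fun_prop) <| ae_of_all _ fun l => by
      rw [hphase, norm_exp_ofReal_mul_I]
  refine le_of_tendsto (Real.tendsto_integral_cexp_sq_smul hf).norm ?_
  filter_upwards [eventually_gt_atTop 0] with c hc
  set b : ℂ := (c⁻¹ : ℝ) + I * t
  have hb : 0 < b.re := by simpa [b] using hc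
  have hdamped : ∫ l : ℝ, cexp (-c⁻¹ * ‖l‖ ^ 2) • (cexp (-I * (t * l ^ 2 + a * l)) * ψ l) =
      ∫ l : ℝ, cexp (-b * l ^ 2 - I * a * l) * ψ l := by
    congr 1 with l
    rw [smul_eq_mul, ← mul_assoc, ← Complex.exp_add, Real.norm_eq_abs, ← ofReal_pow, sq_abs]
    push_cast [b]; ring_nf
  rw [hdamped]
  refine (norm_integral_cexp_quadratic_mul_le hψ hFψ hb a).trans ?_
  gcongr
  simpa [b] using abs_im_le_norm b
end

section
/- Let k ∈ ℂ with k ≠ 0 and Im k ≥ 0, and let f : ℝ → ℂ be continuous with compact support. Define u(x) = (i/(2k)) ∫_ℝ e^{ik|x−y|} f(y) dy. Then u is twice differentiable on ℝ and satisfies u''(x) + k² u(x) = −f(x) for every x ∈ ℝ. -/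
/-!
With `a = ik`, splitting the integral at `y = x` writes `∫ e^{a|x-y|} f(y) dy` as `L x + R x`,
where `L x = ∫_{y ≤ x} e^{a(x-y)} f(y) dy` and `R x = ∫_{y > x} e^{a(y-x)} f(y) dy`. Pulling
`e^{±ax}` out of the integrals shows `L' = aL + f` and `R' = -aR - f`, hence `(L + R)' = a(L - R)`
and `(L - R)' = a(L + R) + 2f`. Multiplying by `i/(2k)` and using `a² = -k²`, `2a · i/(2k) = -1`
gives `u'' + k²u = -f`.
-/

open MeasureTheory Set

section Primitive

variable {E : Type*} [NormedAddCommGroup E] [NormedSpace ℝ E] [CompleteSpace E] {g : ℝ → E}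

theorem hasDerivAt_setIntegral_Iic (hg : Continuous g) (hgi : Integrable g) (x : ℝ) :
    HasDerivAt (fun t => ∫ y in Iic t, g y) (g x) x := by
  have hsplit : (fun t => ∫ y in Iic t, g y) =
      fun t => (∫ y in Iic 0, g y) + ∫ y in 0..t, g y := by
    funext t
    rw [← intervalIntegral.integral_Iic_sub_Iic hgi.integrableOn hgi.integrableOn]
    abel
  rw [hsplit]
  exact (intervalIntegral.integral_hasDerivAt_right hgi.intervalIntegrable
    hg.aestronglyMeasurable.stronglyMeasurableAtFilter hg.continuousAt).const_add _

theorem hasDerivAt_setIntegral_Ioi (hg : Continuous g) (hgi : Integrable g) (x : ℝ) :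
    HasDerivAt (fun t => ∫ y in Ioi t, g y) (-g x) x := by
  have hsplit : (fun t => ∫ y in Ioi t, g y) = fun t => (∫ y, g y) - ∫ y in Iic t, g y := by
    funext t
    rw [← intervalIntegral.integral_Iic_add_Ioi hgi.integrableOn hgi.integrableOn]
    abel
  rw [hsplit]
  exact (hasDerivAt_setIntegral_Iic hg hgi x).const_sub _

end Primitive

theorem hasDerivAt_cexp_const_mul_ofReal (a : ℂ) (x : ℝ) :
    HasDerivAt (fun t : ℝ => Complex.exp (a * t)) (Complex.exp (a * x) * a) x := by
  simpa using ((hasDerivAt_id x).ofReal_comp.const_mul a).cexp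

namespace ExpKernel

variable (a : ℂ) (f : ℝ → ℂ)

noncomputable def left (x : ℝ) : ℂ := ∫ y in Iic x, Complex.exp (a * (x - y)) * f y

noncomputable def right (x : ℝ) : ℂ := ∫ y in Ioi x, Complex.exp (a * (y - x)) * f y

variable {a f} (hf : Continuous f) (hs : HasCompactSupport f)
include hf hs

theorem hasDerivAt_left (x : ℝ) : HasDerivAt (left a f) (a * left a f x + f x) x := by
  have hfactor : left a f =
      fun t : ℝ => Complex.exp (a * t) * ∫ y in Iic t, Complex.exp (-a * y) * f y := by
    funext t
    rw [left, ← integral_const_mul]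
    congr with y
    rw [← mul_assoc, ← Complex.exp_add]
    ring_nf
  have hint : Integrable fun y : ℝ => Complex.exp (-a * y) * f y :=
    (by fun_prop : Continuous _).integrable_of_hasCompactSupport hs.mul_left
  rw [hfactor]
  refine ((hasDerivAt_cexp_const_mul_ofReal a x).mul
    (hasDerivAt_setIntegral_Iic (by fun_prop) hint x)).congr_deriv ?_
  have hcancel : Complex.exp (a * x) * Complex.exp (-a * x) = 1 := by
    rw [← Complex.exp_add, neg_mul, add_neg_cancel, Complex.exp_zero]
  linear_combination f x * hcancel

theorem hasDerivAt_right (x : ℝ) : HasDerivAt (right a f) (-a * right a f x - f x) x := by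
  have hfactor : right a f =
      fun t : ℝ => Complex.exp (-a * t) * ∫ y in Ioi t, Complex.exp (a * y) * f y := by
    funext t
    rw [right, ← integral_const_mul]
    congr with y
    rw [← mul_assoc, ← Complex.exp_add]
    ring_nf
  have hint : Integrable fun y : ℝ => Complex.exp (a * y) * f y :=
    (by fun_prop : Continuous _).integrable_of_hasCompactSupport hs.mul_left
  rw [hfactor]
  refine ((hasDerivAt_cexp_const_mul_ofReal (-a) x).mul
    (hasDerivAt_setIntegral_Ioi (by fun_prop) hint x)).congr_deriv ?_
  have hcancel : Complex.exp (-a * x) * Complex.exp (a * x) = 1 := by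
    rw [← Complex.exp_add, neg_mul, neg_add_cancel, Complex.exp_zero]
  linear_combination -f x * hcancel

theorem integral_cexp_mul_abs_sub_mul (x : ℝ) :
    ∫ y, Complex.exp (a * |x - y|) * f y = left a f x + right a f x := by
  have hint : Integrable fun y : ℝ => Complex.exp (a * |x - y|) * f y :=
    (by fun_prop : Continuous _).integrable_of_hasCompactSupport hs.mul_left
  rw [← intervalIntegral.integral_Iic_add_Ioi hint.integrableOn hint.integrableOn, left, right]
  congr 1
  · refine setIntegral_congr_fun measurableSet_Iic fun y hy => ?_
    rw [abs_of_nonneg (sub_nonneg.2 hy), Complex.ofReal_sub]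
  · refine setIntegral_congr_fun measurableSet_Ioi fun y hy => ?_
    rw [abs_sub_comm, abs_of_pos (sub_pos.2 hy), Complex.ofReal_sub]

end ExpKernel

open ExpKernel in
theorem free_resolvent_kernel_one_dim_general (k : ℂ) (hk : k ≠ 0)
    (f : ℝ → ℂ) (hf : Continuous f) (hsupp : HasCompactSupport f) :
    ∃ u u' : ℝ → ℂ,
      (∀ x : ℝ, u x = (Complex.I / (2 * k)) * ∫ y : ℝ, Complex.exp (Complex.I * k * |x - y|) * f y) ∧
      (∀ x : ℝ, HasDerivAt u (u' x) x) ∧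
      (∀ x : ℝ, HasDerivAt u' (-f x - k ^ 2 * u x) x) := by
  set a := Complex.I * k
  set c := Complex.I / (2 * k)
  have hL := hasDerivAt_left (a := a) hf hsupp
  have hR := hasDerivAt_right (a := a) hf hsupp
  have ha : a ^ 2 = -k ^ 2 := by linear_combination k ^ 2 * Complex.I_sq
  have hca : 2 * c * a = -1 := by
    linear_combination k * k⁻¹ * Complex.I_sq - mul_inv_cancel₀ hk
  refine ⟨fun x => c * (left a f x + right a f x), fun x => c * (a * (left a f x - right a f x)),
    fun x => by rw [integral_cexp_mul_abs_sub_mul hf hsupp], fun x => ?_, fun x => ?_⟩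
  · exact (((hL x).add (hR x)).const_mul c).congr_deriv (by ring)
  · refine ((((hL x).sub (hR x)).const_mul a).const_mul c).congr_deriv ?_
    linear_combination f x * hca + c * (left a f x + right a f x) * ha

/-- The outgoing free resolvent kernel in dimension one: for `k ≠ 0` with `Im k ≥ 0`
and `f` continuous with compact support, `u(x) = (i/(2k)) ∫ e^{ik|x-y|} f(y) dy` is twice
differentiable and satisfies `u'' + k² u = -f`. -/
theorem free_resolvent_kernel_one_dim (k : ℂ) (hk : k ≠ 0) (hIm : 0 ≤ k.im)
    (f : ℝ → ℂ) (hf : Continuous f) (hsupp : HasCompactSupport f) :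
    ∃ u u' : ℝ → ℂ,
      (∀ x : ℝ, u x = (Complex.I / (2 * k)) * ∫ y : ℝ, Complex.exp (Complex.I * k * |x - y|) * f y) ∧
      (∀ x : ℝ, HasDerivAt u (u' x) x) ∧
      (∀ x : ℝ, HasDerivAt u' (-f x - k ^ 2 * u x) x) :=
  free_resolvent_kernel_one_dim_general k hk f hf hsupp
end
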